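/- Let n ≥ 3 and let V_1,...,V_n, W_1,...,W_n be jointly distributed {-1,+1}-valued random variables. Then s_odd(E[V_1 W_2], E[V_2 W_3], ..., E[V_n W_1], E[V_1 W_1], E[V_2 W_2], ..., E[V_n W_n]) ≤ 2n - 2, where s_odd of a list of 2n reals is the maximum of signed sums with an odd number of minus signs. -/

import Mathlib

open Finset

/-- Number of minus signs in a sign vector (encoded as a Boolean vector,
`true` meaning the sign `-1`). -/
def negCount {ι : Type*} [Fintype ι] [DecidableEq ι] (ε : ι → Bool) : ℕ :=
  (Finset.univ.filter (fun i => ε i = true)).card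

/-- The signed sum `Σ ε_i a_i` corresponding to a sign vector. -/
def sgnSum {ι : Type*} [Fintype ι] (a : ι → ℝ) (ε : ι → Bool) : ℝ :=
  ∑ i, (if ε i then -(a i) else a i)

/-- Sign vectors with an even number of `-1`'s. -/
def evenSigns (ι : Type*) [Fintype ι] [DecidableEq ι] : Finset (ι → Bool) :=
  Finset.univ.filter (fun ε => Even (negCount ε))

/-- Sign vectors with an odd number of `-1`'s. -/
def oddSigns (ι : Type*) [Fintype ι] [DecidableEq ι] : Finset (ι → Bool) :=
  Finset.univ.filter (fun ε => Odd (negCount ε))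

lemma evenSigns_nonempty (ι : Type*) [Fintype ι] [DecidableEq ι] :
    (evenSigns ι).Nonempty :=
  ⟨fun _ => false, by rw [evenSigns, Finset.mem_filter]; exact ⟨Finset.mem_univ _, by simp [negCount]⟩⟩

lemma oddSigns_nonempty (ι : Type*) [Fintype ι] [DecidableEq ι] [Nonempty ι] :
    (oddSigns ι).Nonempty := by
  refine ⟨fun i => decide (i = Classical.arbitrary ι), ?_⟩
  rw [oddSigns, Finset.mem_filter]
  exact ⟨Finset.mem_univ _, by simp [negCount, Finset.filter_eq']⟩

/-- `s_even`: maximum of signed sums over sign vectors with evenly many minuses. -/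
noncomputable def sEven {ι : Type*} [Fintype ι] [DecidableEq ι] (a : ι → ℝ) : ℝ :=
  (evenSigns ι).sup' (evenSigns_nonempty ι) (sgnSum a)

/-- `s_odd`: maximum of signed sums over sign vectors with oddly many minuses. -/
noncomputable def sOdd {ι : Type*} [Fintype ι] [DecidableEq ι] [Nonempty ι] (a : ι → ℝ) : ℝ :=
  (oddSigns ι).sup' (oddSigns_nonempty ι) (sgnSum a)

open MeasureTheory

/-! In each outcome the `2n` products `V_i W_{i+1}`, `V_i W_i` are signs whose product is
`(∏ V_i)² (∏ W_i)² = 1`. Flipping an odd number of them leaves a sign vector of product `-1`,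
which has at least one `-1` entry, so every odd signed sum is at most `2n - 2` pointwise;
taking expectations, which commute with signed sums, gives the same bound for the
correlations. -/

section

variable {ι : Type*} [Fintype ι]

lemma mul_eq_one_or_eq_neg_one {a b : ℝ} (ha : a = 1 ∨ a = -1) (hb : b = 1 ∨ b = -1) :
    a * b = 1 ∨ a * b = -1 := by
  rcases ha with rfl | rfl <;> rcases hb with rfl | rfl <;> norm_num

lemma sum_le_card_sub_two_of_prod_eq_neg_one {f : ι → ℝ} (hf : ∀ i, f i = 1 ∨ f i = -1)
    (hprod : ∏ i, f i = -1) : ∑ i, f i ≤ Fintype.card ι - 2 := by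
  classical
  obtain ⟨j, hj⟩ : ∃ j, f j = -1 := by
    by_contra! h
    rw [Finset.prod_eq_one fun i _ => (hf i).resolve_right (h i)] at hprod
    norm_num at hprod
  have hrest : ∑ i ∈ univ.erase j, f i ≤ ∑ _i ∈ univ.erase j, (1 : ℝ) :=
    Finset.sum_le_sum fun i _ => by rcases hf i with h | h <;> linarith
  rw [Finset.sum_const, Finset.card_erase_of_mem (mem_univ j), card_univ, nsmul_one,
    Nat.cast_pred (Fintype.card_pos_iff.mpr ⟨j⟩)] at hrest
  rw [← Finset.sum_erase_add _ _ (mem_univ j), hj]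
  linarith

lemma sgnSum_eq_sum_mul (a : ι → ℝ) (ε : ι → Bool) :
    sgnSum a ε = ∑ i, (if ε i then (-1 : ℝ) else 1) * a i :=
  Finset.sum_congr rfl fun i _ => by split_ifs <;> ring

variable {Ω : Type*} [MeasurableSpace Ω] {μ : Measure Ω}

lemma integral_sgnSum {X : ι → Ω → ℝ} (hX : ∀ i, Integrable (X i) μ) (ε : ι → Bool) :
    ∫ ω, sgnSum (fun i => X i ω) ε ∂μ = sgnSum (fun i => ∫ ω, X i ω ∂μ) ε := by
  simp only [sgnSum_eq_sum_mul]
  rw [integral_finsetSum _ fun i _ => (hX i).const_mul _]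
  simp only [integral_const_mul]

variable [DecidableEq ι]

lemma prod_ite_neg_one_eq_neg_one_pow_negCount (ε : ι → Bool) :
    ∏ i, (if ε i then (-1 : ℝ) else 1) = (-1) ^ negCount ε := by
  rw [Finset.prod_ite, Finset.prod_const, Finset.prod_const, one_pow, mul_one, negCount]

lemma sOdd_le_card_sub_two_of_prod_eq_one [Nonempty ι] {x : ι → ℝ}
    (hx : ∀ i, x i = 1 ∨ x i = -1) (hprod : ∏ i, x i = 1) :
    sOdd x ≤ Fintype.card ι - 2 := by
  refine Finset.sup'_le _ _ fun ε hε => ?_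
  have hodd : Odd (negCount ε) := (Finset.mem_filter.mp hε).2
  rw [sgnSum_eq_sum_mul]
  refine sum_le_card_sub_two_of_prod_eq_neg_one
    (fun i => mul_eq_one_or_eq_neg_one (by split_ifs <;> simp) (hx i)) ?_
  rw [Finset.prod_mul_distrib, prod_ite_neg_one_eq_neg_one_pow_negCount, hprod, mul_one,
    hodd.neg_one_pow]

lemma sOdd_integral_le_of_forall_le [Nonempty ι] [IsProbabilityMeasure μ] {X : ι → Ω → ℝ}
    (hX : ∀ i, Integrable (X i) μ) {c : ℝ} (hc : ∀ ω, sOdd (fun i => X i ω) ≤ c) :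
    sOdd (fun i => ∫ ω, X i ω ∂μ) ≤ c := by
  refine Finset.sup'_le _ _ fun ε hε => ?_
  calc sgnSum (fun i => ∫ ω, X i ω ∂μ) ε = ∫ ω, sgnSum (fun i => X i ω) ε ∂μ :=
        (integral_sgnSum hX ε).symm
    _ ≤ ∫ _ω, c ∂μ := by
        refine integral_mono ?_ (integrable_const c) fun ω => (Finset.le_sup' _ hε).trans (hc ω)
        simp only [sgnSum_eq_sum_mul]
        exact integrable_finsetSum _ fun i _ => (hX i).const_mul _
    _ = c := by simp

end

lemma prod_sum_elim_mul_comp_eq_one {ι : Type*} [Fintype ι] (σ : ι ≃ ι) {v w : ι → ℝ}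
    (hv : ∀ i, v i = 1 ∨ v i = -1) (hw : ∀ i, w i = 1 ∨ w i = -1) :
    ∏ i, Sum.elim (fun i => v i * w (σ i)) (fun i => v i * w i) i = 1 := by
  have hsq : ∀ {a : ℝ}, a = 1 ∨ a = -1 → a * a = 1 := by rintro a (rfl | rfl) <;> norm_num
  rw [Fintype.prod_sum_type]
  simp only [Sum.elim_inl, Sum.elim_inr, Finset.prod_mul_distrib, σ.prod_comp]
  calc (∏ i, v i) * (∏ i, w i) * ((∏ i, v i) * ∏ i, w i)
      = (∏ i, v i * v i) * ∏ i, w i * w i := by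
        rw [Finset.prod_mul_distrib, Finset.prod_mul_distrib]; ring
    _ = 1 := by simp only [hsq (hv _), hsq (hw _), Finset.prod_const_one, mul_one]

theorem cyclic_compatibility_necessity_general
    (n : ℕ) [NeZero n]
    {Ω : Type*} [MeasurableSpace Ω] (μ : Measure Ω) [IsProbabilityMeasure μ]
    (V W : Fin n → Ω → ℝ)
    (hV : ∀ i ω, V i ω = 1 ∨ V i ω = -1)
    (hW : ∀ i ω, W i ω = 1 ∨ W i ω = -1)
    (mV : ∀ i, Measurable (V i)) (mW : ∀ i, Measurable (W i)) :
    sOdd (Sum.elim (fun i : Fin n => ∫ ω, V i ω * W (i + 1) ω ∂μ)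
                   (fun i : Fin n => ∫ ω, V i ω * W i ω ∂μ)) ≤ 2 * (n : ℝ) - 2 := by
  set X : Fin n ⊕ Fin n → Ω → ℝ := fun i ω =>
    Sum.elim (fun i => V i ω * W (i + 1) ω) (fun i => V i ω * W i ω) i
  have hX : ∀ i ω, X i ω = 1 ∨ X i ω = -1 := by
    rintro (i | i) ω <;> exact mul_eq_one_or_eq_neg_one (hV _ _) (hW _ _)
  have hXint : ∀ i, Integrable (X i) μ := fun i =>
    Integrable.of_bound
      (by rcases i with i | i <;> exact ((mV _).mul (mW _)).aestronglyMeasurable) 1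
      (ae_of_all _ fun ω => by rcases hX i ω with h | h <;> simp [h])
  have hcorr : Sum.elim (fun i : Fin n => ∫ ω, V i ω * W (i + 1) ω ∂μ)
      (fun i : Fin n => ∫ ω, V i ω * W i ω ∂μ) = fun i => ∫ ω, X i ω ∂μ := by
    ext (i | i) <;> rfl
  rw [hcorr]
  refine sOdd_integral_le_of_forall_le hXint fun ω => ?_
  have hprod := prod_sum_elim_mul_comp_eq_one (Equiv.addRight 1) (hV · ω) (hW · ω)
  simpa [Fintype.card_sum, two_mul] using sOdd_le_card_sub_two_of_prod_eq_one (hX · ω) hprod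

/-- Necessity of the compatibility condition for cyclic systems: for jointly
distributed `±1`-valued `V_1,…,V_n, W_1,…,W_n`, `s_odd` of the `n` observed
correlations `E[V_i W_{i⊕1}]` together with the `n` connection correlations
`E[V_i W_i]` is at most `2n - 2`. -/
theorem cyclic_compatibility_necessity
    (n : ℕ) [NeZero n] (hn : 3 ≤ n)
    {Ω : Type*} [MeasurableSpace Ω] (μ : Measure Ω) [IsProbabilityMeasure μ]
    (V W : Fin n → Ω → ℝ)
    (hV : ∀ i ω, V i ω = 1 ∨ V i ω = -1)
    (hW : ∀ i ω, W i ω = 1 ∨ W i ω = -1)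
    (mV : ∀ i, Measurable (V i)) (mW : ∀ i, Measurable (W i)) :
    sOdd (Sum.elim (fun i : Fin n => ∫ ω, V i ω * W (i + 1) ω ∂μ)
                   (fun i : Fin n => ∫ ω, V i ω * W i ω ∂μ)) ≤ 2 * (n : ℝ) - 2 :=
  cyclic_compatibility_necessity_general n μ V W hV hW mV mW
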